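/- Let S(x,q) be a generating function on ℝ^m × (ℝ^n)^* and Φ_S^* the associated thick-morphism pull-back with formal map y(x,g). Then Φ_S^* admits the closed form Φ_S^*(g) = g(y(x,g)) + S_0(x) − Σ_{k≥2} (k−1) S_k^{a_1…a_k}(x) (∂_{a_1}g)(y(x,g)) ⋯ (∂_{a_k}g)(y(x,g)), where equality means equality of the homogeneous-in-g components of every order and all compositions of smooth functions with the formal map y(x,g) are expanded by Taylor series at y_0(x) = S_1(x). -/
import Mathlib


open scoped BigOperators

namespace ThickMorphism

/-- Real-valued functions on `ℝ^n` (the ambient space of `C^∞(ℝ^n)`). -/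
abbrev Fn (n : ℕ) : Type := (Fin n → ℝ) → ℝ

/-- `ℝ^n`-valued functions on `ℝ^m`. -/
abbrev VFn (m n : ℕ) : Type := (Fin m → ℝ) → Fin n → ℝ

/-- `f` is a smooth (`C^∞`) function on `ℝ^n`. -/
def Sm {n : ℕ} (f : Fn n) : Prop := ContDiff ℝ (⊤ : ℕ∞) f

/-- `f` is a smooth (`C^∞`) map from `ℝ^m` to `ℝ^n`. -/
def SmV {m n : ℕ} (f : VFn m n) : Prop := ContDiff ℝ (⊤ : ℕ∞) f

/-- The partial derivative `∂_b g`. -/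
noncomputable def pd {n : ℕ} (b : Fin n) (g : Fn n) : Fn n :=
  fun y => fderiv ℝ g y (Pi.single b 1)

/-- The `a`-th coordinate function `y^a` on `ℝ^n`. -/
def coordFn {n : ℕ} (a : Fin n) : Fn n := fun y => y a

/-- Ordered tuples of `j` positive parts summing to `k` (parts coded in `Fin (k+1)`). -/
def parts (j k : ℕ) : Finset (Fin j → Fin (k + 1)) :=
  Finset.univ.filter fun t => (∑ i, (t i : ℕ)) = k ∧ ∀ i, 0 < (t i : ℕ)

/-- Order-`k` component of the Taylor expansion (at `Y 0`) of `h ∘ Y`,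
where `Y r` is the order-`r` component of a formal map with values in `ℝ^n`:
`Σ_{j} Σ_{r_1+⋯+r_j = k, r_i ≥ 1} (1/j!) ∂^j h (Y 0 x) (Y_{r_1}(x),…,Y_{r_j}(x))`. -/
noncomputable def taylorComp {m n : ℕ} (h : Fn n) (Y : ℕ → VFn m n) (k : ℕ) : Fn m :=
  fun x => ∑ j ∈ Finset.range (k + 1), ∑ t ∈ parts j k,
    ((Nat.factorial j : ℝ))⁻¹ * iteratedFDeriv ℝ j h (Y 0 x) (fun i => Y (t i : ℕ) x)

/-- A formal functional from `C^∞(ℝ^n)` to `C^∞(ℝ^m)`: a sequence of symmetric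
`k`-linear maps `B k` (the polarised forms), preserving smoothness; the order-`k`
component of the functional is the diagonal restriction `g ↦ B k (g,…,g)`. -/
structure FormalFunctional (n m : ℕ) where
  B : (k : ℕ) → MultilinearMap ℝ (fun _ : Fin k => Fn n) (Fn m)
  symm : ∀ (k : ℕ) (σ : Equiv.Perm (Fin k)) (v : Fin k → Fn n), B k (v ∘ σ) = B k v
  smooth : ∀ (k : ℕ) (v : Fin k → Fn n), (∀ i, Sm (v i)) → Sm (B k v)

/-- The order-`k` component `L_k(g)` of a formal functional. -/
def FormalFunctional.ord {n m : ℕ} (L : FormalFunctional n m) (k : ℕ) (g : Fn n) : Fn m :=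
  L.B k (fun _ => g)

/-- A formal map over `C^∞(ℝ^n)` with values in `ℝ^n`-valued functions on `ℝ^m`:
a sequence of symmetric `r`-linear maps `K r`; the order-`r` component at `g`
is the diagonal restriction. -/
structure FormalMap (n m : ℕ) where
  K : (r : ℕ) → MultilinearMap ℝ (fun _ : Fin r => Fn n) (VFn m n)
  symm : ∀ (r : ℕ) (σ : Equiv.Perm (Fin r)) (v : Fin r → Fn n), K r (v ∘ σ) = K r v
  smooth : ∀ (r : ℕ) (v : Fin r → Fn n), (∀ i, Sm (v i)) → SmV (K r v)

/-- The order-`r` component `K_r(g)` of a formal map. -/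
def FormalMap.ord {n m : ℕ} (K : FormalMap n m) (r : ℕ) (g : Fn n) : VFn m n :=
  K.K r (fun _ => g)

/-- The support map `K₀` of a formal map. -/
def FormalMap.supp {n m : ℕ} (K : FormalMap n m) : VFn m n :=
  K.K 0 (fun i => i.elim0)

/-- `L` is a non-linear homomorphism with associated formal map `K`: for all smooth
`g, h` and all `k`, the order-`k`-in-`g` component of the differential of `L` at `g`
in direction `h`, namely `(k+1)·B_{k+1}(h,g,…,g)`, equals the order-`k` component
of the formal (Taylor) composition `h(K(g))`. -/
def IsNonlinearHomWith {n m : ℕ} (L : FormalFunctional n m) (K : FormalMap n m) : Prop :=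
  ∀ (g h : Fn n), Sm g → Sm h → ∀ k : ℕ,
    ((k : ℝ) + 1) • L.B (k + 1) (Fin.cons h (fun _ => g)) =
      taylorComp h (fun r => K.ord r g) k

/-- `L` is a non-linear homomorphism. -/
def IsNonlinearHom {n m : ℕ} (L : FormalFunctional n m) : Prop :=
  ∃ K : FormalMap n m, IsNonlinearHomWith L K

/-- A generating function `S(x,q) = Σ_k S_k^{a_1…a_k}(x) q_{a_1}⋯q_{a_k}` of a thick
morphism `ℝ^m ⇛ ℝ^n`: smooth symmetric tensors `S k x : (Fin k → Fin n) → ℝ`. -/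
structure GenFn (m n : ℕ) where
  S : (k : ℕ) → (Fin m → ℝ) → (Fin k → Fin n) → ℝ
  symm : ∀ (k : ℕ) (σ : Equiv.Perm (Fin k)) (x : Fin m → ℝ) (a : Fin k → Fin n),
    S k x (a ∘ σ) = S k x a
  smooth : ∀ (k : ℕ) (a : Fin k → Fin n), Sm (fun x => S k x a)

/-- The first-order coefficient `S_1` of a generating function, as a map `ℝ^m → ℝ^n`. -/
def sOne {m n : ℕ} (S : GenFn m n) : VFn m n := fun x a => S.S 1 x (fun _ => a)

/-- Order-`t`-in-`g` component (`t ≥ 1`) of `q_b = (∂_b g)(y(x,g))`, the formal map `y`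
having components `Y`: it is the Taylor-composition component of order `t-1`. -/
noncomputable def qComp {m n : ℕ} (g : Fn n) (Y : ℕ → VFn m n) (b : Fin n) (t : ℕ) : Fn m :=
  taylorComp (pd b g) Y (t - 1)

/-- Order-`N`-in-`g` component of `∂S(x,q)/∂q_a` evaluated at `q_b = (∂_b g)(y(x,g))`,
where `y` has components `Y`. -/
noncomputable def dSComp {m n : ℕ} (S : GenFn m n) (g : Fn n) (Y : ℕ → VFn m n) (N : ℕ) :
    VFn m n :=
  fun x a => ∑ j ∈ Finset.range (N + 1), ∑ b : Fin j → Fin n, ∑ t ∈ parts j N,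
    ((j : ℝ) + 1) * S.S (j + 1) x (Fin.cons a b) * ∏ i, qComp g Y (b i) (t i : ℕ) x

/-- Auxiliary recursion: `thickYAux S g k r` is the order-`r` component `y_r(x,g)` of the
formal map of the thick morphism `Φ_S` for `r ≤ k` (and `0` for `r > k`). -/
noncomputable def thickYAux {m n : ℕ} (S : GenFn m n) (g : Fn n) : ℕ → ℕ → VFn m n
  | 0 => fun r => if r = 0 then (fun x a => S.S 1 x (fun _ => a)) else 0
  | k + 1 => fun r =>
      if r = k + 1 then dSComp S g (thickYAux S g k) (k + 1) else thickYAux S g k r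

/-- The order-`k` component `y_k(x,g)` of the formal map of the thick morphism `Φ_S`:
`y_0 = S_1`, and `y_{k+1}` is the order-`(k+1)`-in-`g` component of `∂S/∂q_a` at
`q = (∂g)(y_{≤k}(x,g))`. -/
noncomputable def thickY {m n : ℕ} (S : GenFn m n) (g : Fn n) (k : ℕ) : VFn m n :=
  thickYAux S g k k

/-- Order-`k`-in-`g` component of `S(x,q)` evaluated at `q = (∂g)(y(x,g))`. -/
noncomputable def SqComp {m n : ℕ} (S : GenFn m n) (g : Fn n) (k : ℕ) : Fn m :=
  fun x => ∑ j ∈ Finset.range (k + 1), ∑ b : Fin j → Fin n, ∑ t ∈ parts j k,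
    S.S j x b * ∏ i, qComp g (thickY S g) (b i) (t i : ℕ) x

/-- Order-`k`-in-`g` component of `y^a q_a` at `y = y(x,g)`, `q = (∂g)(y(x,g))`. -/
noncomputable def yqComp {m n : ℕ} (S : GenFn m n) (g : Fn n) (k : ℕ) : Fn m :=
  fun x => ∑ a : Fin n, ∑ t ∈ Finset.Icc 1 k,
    thickY S g (k - t) x a * qComp g (thickY S g) a t x

/-- The order-`k`-in-`g` component of the thick-morphism pull-back `Φ_S^*(g)`, i.e. of
`g(y) + S(x,q) − y^a q_a` at `y = y(x,g)`, `q = (∂g)(y(x,g))`, all compositions being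
expanded by Taylor series at `y_0 = S_1(x)`. -/
noncomputable def thickPull {m n : ℕ} (S : GenFn m n) (g : Fn n) (k : ℕ) : Fn m :=
  fun x =>
    (if k = 0 then 0 else taylorComp g (thickY S g) (k - 1) x)
      + SqComp S g k x - yqComp S g k x

/-- The coordinate functions are smooth. -/
lemma coordFn_smooth {n : ℕ} (a : Fin n) : Sm (coordFn a) :=
  (ContinuousLinearMap.proj a : (Fin n → ℝ) →L[ℝ] ℝ).contDiff

/-- The generating function `S_L` associated with a formal functional `L`:
`S_k^{a_1…a_k}(x) = B_k(y^{a_1},…,y^{a_k})(x)`, the polarised forms of `L`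
evaluated on the coordinate functions of `ℝ^n`. -/
noncomputable def assocGen {n m : ℕ} (L : FormalFunctional n m) : GenFn m n where
  S := fun k x a => L.B k (fun i => coordFn (a i)) x
  symm := by
    intro k σ x a
    have h := L.symm k σ (fun i => coordFn (a i))
    exact congrFun h x
  smooth := fun k a => L.smooth k _ (fun i => coordFn_smooth (a i))

/-- Truncation of a generating function to degree `≤ k` in `q`. -/
noncomputable def truncGen {m n : ℕ} (S : GenFn m n) (k : ℕ) : GenFn m n where
  S := fun i x a => if i ≤ k then S.S i x a else 0
  symm := by
    intro i σ x a
    by_cases h : i ≤ k <;> simp [h, S.symm]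
  smooth := by
    intro i a
    by_cases h : i ≤ k
    · simpa [Sm, h] using S.smooth i a
    · simpa [Sm, h] using (contDiff_const : ContDiff ℝ (⊤ : ℕ∞) fun _ : Fin m → ℝ => (0 : ℝ))


/-! ### Auxiliary lemmas for Statement 9 -/

lemma mem_parts {j k : ℕ} {t : Fin j → Fin (k + 1)} :
    t ∈ parts j k ↔ (∑ i, (t i : ℕ)) = k ∧ ∀ i, 0 < (t i : ℕ) := by
  simp [parts]

lemma parts_le {j k : ℕ} {t : Fin j → Fin (k + 1)} (ht : t ∈ parts j k) (i : Fin j) :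
    (t i : ℕ) ≤ k := by
  rcases mem_parts.1 ht with ⟨hs, -⟩
  calc (t i : ℕ) ≤ ∑ i', (t i' : ℕ) :=
        Finset.single_le_sum (f := fun i' => ((t i' : ℕ))) (fun _ _ => Nat.zero_le _) (Finset.mem_univ i)
    _ = k := hs

lemma parts_eq_empty {j k : ℕ} (h : k < j) : parts j k = ∅ := by
  ext t
  simp only [mem_parts, Finset.notMem_empty, iff_false, not_and]
  intro hs hp
  have hj : j ≤ ∑ i, (t i : ℕ) := by
    calc j = ∑ _i : Fin j, 1 := by simp
      _ ≤ ∑ i, (t i : ℕ) := Finset.sum_le_sum fun i _ => hp i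
  omega

/-- Re-encode a sum over `parts j k` (coded in `Fin (k+1)`) as an indicator sum over
all tuples coded in `Fin (K+1)`, for any `K ≥ k`. -/
lemma sum_parts {j k K : ℕ} (hk : k ≤ K) (F : (Fin j → ℕ) → ℝ) :
    ∑ t ∈ parts j k, F (fun i => (t i : ℕ)) =
      ∑ t : Fin j → Fin (K + 1),
        if (∑ i, (t i : ℕ)) = k ∧ (∀ i, 0 < (t i : ℕ)) then F (fun i => (t i : ℕ)) else 0 := by
  rw [← Finset.sum_filter]
  refine Finset.sum_nbij' (fun t i => Fin.castLE (by omega) (t i))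
    (fun t i => ⟨min (t i : ℕ) k, by omega⟩) ?_ ?_ ?_ ?_ ?_
  · intro t ht
    rcases mem_parts.1 ht with ⟨h1, h2⟩
    simp only [Finset.mem_filter, Finset.mem_univ, true_and, Fin.coe_castLE]
    exact ⟨h1, h2⟩
  · intro t ht
    simp only [Finset.mem_filter, Finset.mem_univ, true_and] at ht
    rcases ht with ⟨h1, h2⟩
    have hle : ∀ i, (t i : ℕ) ≤ k := fun i =>
      h1 ▸ Finset.single_le_sum (f := fun i' => ((t i' : ℕ))) (fun _ _ => Nat.zero_le _) (Finset.mem_univ i)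
    rw [mem_parts]
    constructor
    · refine (Finset.sum_congr rfl fun i _ => ?_).trans h1
      simp [Nat.min_eq_left (hle i)]
    · intro i
      simpa [Nat.min_eq_left (hle i)] using h2 i
  · intro t ht
    funext i
    ext
    simp [Nat.min_eq_left (parts_le ht i)]
  · intro t ht
    simp only [Finset.mem_filter, Finset.mem_univ, true_and] at ht
    have hle : ∀ i, (t i : ℕ) ≤ k := fun i =>
      ht.1 ▸ Finset.single_le_sum (f := fun i' => ((t i' : ℕ))) (fun _ _ => Nat.zero_le _) (Finset.mem_univ i)
    funext i
    ext
    simp [Nat.min_eq_left (hle i)]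
  · intro t ht
    rfl

/-- Splitting a sum over tuples of length `j+1` into first entry and tail. -/
lemma sum_pi_succ {j : ℕ} {β : Type} [Fintype β] {M : Type} [AddCommMonoid M]
    (G : (Fin (j + 1) → β) → M) :
    ∑ t : Fin (j + 1) → β, G t = ∑ s : β, ∑ t' : Fin j → β, G (Fin.cons s t') := by
  rw [← Equiv.sum_comp (Fin.consEquiv (fun _ => β)) G, Fintype.sum_prod_type]
  rfl

lemma taylorComp_congr {m n : ℕ} (h : Fn n) {Y Y' : ℕ → VFn m n} (k : ℕ)
    (hY : ∀ r, r ≤ k → Y r = Y' r) : taylorComp h Y k = taylorComp h Y' k := by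
  funext x
  unfold taylorComp
  refine Finset.sum_congr rfl fun j _ => Finset.sum_congr rfl fun t ht => ?_
  have hfun : (fun i => Y ((t i : ℕ)) x) = fun i => Y' ((t i : ℕ)) x := by
    funext i
    rw [hY _ (parts_le ht i)]
  rw [hY 0 (Nat.zero_le _), hfun]

lemma qComp_congr {m n : ℕ} (g : Fn n) {Y Y' : ℕ → VFn m n} (b : Fin n) (t : ℕ)
    (hY : ∀ r, r ≤ t - 1 → Y r = Y' r) : qComp g Y b t = qComp g Y' b t :=
  taylorComp_congr _ _ hY

lemma dSComp_congr {m n : ℕ} (S : GenFn m n) (g : Fn n) {Y Y' : ℕ → VFn m n} (N : ℕ)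
    (hY : ∀ r, r ≤ N - 1 → Y r = Y' r) : dSComp S g Y N = dSComp S g Y' N := by
  funext x a
  unfold dSComp
  refine Finset.sum_congr rfl fun j _ => Finset.sum_congr rfl fun b _ =>
    Finset.sum_congr rfl fun t ht => ?_
  congr 1
  refine Finset.prod_congr rfl fun i _ => ?_
  rw [qComp_congr g (b i) (t i : ℕ) fun r hr => hY r (by have := parts_le ht i; omega)]

lemma thickYAux_stable {m n : ℕ} (S : GenFn m n) (g : Fn n) :
    ∀ K r, r ≤ K → thickYAux S g K r = thickY S g r := by
  intro K
  induction K with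
  | zero =>
    intro r hr
    have : r = 0 := by omega
    subst this
    rfl
  | succ K ih =>
    intro r hr
    by_cases h : r = K + 1
    · subst h
      rfl
    · have hrK : r ≤ K := by omega
      have : thickYAux S g (K + 1) r = thickYAux S g K r := by
        simp [thickYAux, h]
      rw [this, ih r hrK]

lemma thickY_zero {m n : ℕ} (S : GenFn m n) (g : Fn n) :
    thickY S g 0 = fun x a => S.S 1 x (fun _ => a) := rfl

lemma parts_zero_zero : parts 0 0 = Finset.univ := by
  ext t
  simp only [mem_parts, Finset.mem_univ, iff_true]
  exact ⟨by simp, fun i => i.elim0⟩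

lemma thickY_eq_dSComp {m n : ℕ} (S : GenFn m n) (g : Fn n) (r : ℕ) :
    thickY S g r = dSComp S g (thickY S g) r := by
  cases r with
  | zero =>
    rw [thickY_zero]
    funext x a
    unfold dSComp
    rw [Finset.sum_range_one, parts_zero_zero]
    rw [Fintype.sum_subsingleton _ (fun i : Fin 0 => i.elim0),
      Fintype.sum_subsingleton _ (fun i : Fin 0 => (0 : Fin 1))]
    simp only [Nat.cast_zero, zero_add, one_mul, Finset.univ_eq_empty, Finset.prod_empty,
      mul_one]
    congr 1
    funext i
    have : i = 0 := Subsingleton.elim _ _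
    subst this
    simp
  | succ K =>
    have h1 : thickY S g (K + 1) = dSComp S g (thickYAux S g K) (K + 1) := by
      simp [thickY, thickYAux]
    rw [h1]
    exact dSComp_congr S g (K + 1) fun r hr =>
      thickYAux_stable S g K r (by omega)

set_option maxHeartbeats 2000000 in
/-- The key combinatorial identity: the order-`k` component of `y^a q_a` equals
`Σ_j j S_j^{a_1…a_j} q_{a_1}^{(t_1)} ⋯ q_{a_j}^{(t_j)}` summed over compositions. -/
lemma yqComp_eq {m n : ℕ} (S : GenFn m n) (g : Fn n) (k : ℕ) (x : Fin m → ℝ) :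
    yqComp S g k x = ∑ j ∈ Finset.range (k + 1), ∑ b : Fin j → Fin n, ∑ t ∈ parts j k,
      (j : ℝ) * S.S j x b * ∏ i, qComp g (thickY S g) (b i) (t i : ℕ) x := by
  -- abbreviation for the q-components
  set q : Fin n → ℕ → ℝ := fun a t => qComp g (thickY S g) a t x with hq
  -- the common normal form
  have main : ∀ j' : ℕ,
      (∑ a : Fin n, ∑ s ∈ Finset.Icc 1 k,
        ∑ b : Fin j' → Fin n, ∑ t ∈ parts j' (k - s),
          ((j' : ℝ) + 1) * S.S (j' + 1) x (Fin.cons a b) *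
            (∏ i, q (b i) (t i : ℕ)) * q a s)
      = ∑ b : Fin (j' + 1) → Fin n, ∑ t ∈ parts (j' + 1) k,
          ((j' : ℝ) + 1) * S.S (j' + 1) x b * ∏ i, q (b i) (t i : ℕ) := by
    intro j'
    -- transform the RHS into the split normal form
    have rhs_eq :
        (∑ b : Fin (j' + 1) → Fin n, ∑ t ∈ parts (j' + 1) k,
          ((j' : ℝ) + 1) * S.S (j' + 1) x b * ∏ i, q (b i) (t i : ℕ))
        = ∑ a : Fin n, ∑ b : Fin j' → Fin n, ∑ s : Fin (k + 1),
            ∑ t' : Fin j' → Fin (k + 1),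
            (if (s : ℕ) + (∑ i, (t' i : ℕ)) = k ∧ 0 < (s : ℕ) ∧ (∀ i, 0 < (t' i : ℕ))
              then ((j' : ℝ) + 1) * S.S (j' + 1) x (Fin.cons a b) *
                (∏ i, q (b i) (t' i : ℕ)) * q a (s : ℕ)
              else 0) := by
      refine (sum_pi_succ _).trans ?_
      refine Finset.sum_congr rfl fun a _ => Finset.sum_congr rfl fun b _ => ?_
      refine ((sum_parts (le_refl k) (fun u => ((j' : ℝ) + 1) * S.S (j' + 1) x (Fin.cons a b) *
        ∏ i, q ((Fin.cons a b : Fin (j' + 1) → Fin n) i) (u i))).trans ?_)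
      refine (sum_pi_succ _).trans ?_
      refine Finset.sum_congr rfl fun s _ => Finset.sum_congr rfl fun t' _ => ?_
      have hsum : (∑ i : Fin (j' + 1), ((Fin.cons s t' : Fin (j' + 1) → Fin (k + 1)) i : ℕ))
          = (s : ℕ) + ∑ i, (t' i : ℕ) := by
        rw [Fin.sum_univ_succ]
        simp
      have hval : (∏ i : Fin (j' + 1), q ((Fin.cons a b : Fin (j' + 1) → Fin n) i)
            ((Fin.cons s t' : Fin (j' + 1) → Fin (k + 1)) i : ℕ))
          = q a (s : ℕ) * ∏ i, q (b i) (t' i : ℕ) := by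
        rw [Fin.prod_univ_succ]
        simp
      have hpos : (∀ i : Fin (j' + 1), 0 < ((Fin.cons s t' : Fin (j' + 1) → Fin (k + 1)) i : ℕ))
          ↔ (0 < (s : ℕ) ∧ ∀ i : Fin j', 0 < (t' i : ℕ)) := by
        constructor
        · intro h
          exact ⟨by simpa using h 0, fun i => by simpa using h i.succ⟩
        · rintro ⟨h0, h1⟩ i
          refine Fin.cases ?_ ?_ i
          · simpa using h0
          · intro i'
            simpa using h1 i'
      simp only [hsum, hval, hpos]
      split_ifs with h1
      · ring
      · rfl
    rw [rhs_eq]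
    -- transform the LHS into the same split normal form
    refine Finset.sum_congr rfl fun a _ => ?_
    rw [Finset.sum_comm]
    refine Finset.sum_congr rfl fun b _ => ?_
    have hIcc : Finset.Icc 1 k = (Finset.range (k + 1)).filter (fun s => 1 ≤ s) := by
      ext s
      simp only [Finset.mem_Icc, Finset.mem_filter, Finset.mem_range]
      omega
    calc ∑ s ∈ Finset.Icc 1 k, ∑ t ∈ parts j' (k - s),
          ((j' : ℝ) + 1) * S.S (j' + 1) x (Fin.cons a b) *
            (∏ i, q (b i) (t i : ℕ)) * q a s
        = ∑ s ∈ Finset.Icc 1 k, ∑ t' : Fin j' → Fin (k + 1),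
            (if (∑ i, (t' i : ℕ)) = k - s ∧ (∀ i, 0 < (t' i : ℕ))
              then ((j' : ℝ) + 1) * S.S (j' + 1) x (Fin.cons a b) *
                (∏ i, q (b i) (t' i : ℕ)) * q a s
              else 0) := by
          refine Finset.sum_congr rfl fun s _ => ?_
          exact sum_parts (Nat.sub_le k s) (fun u =>
            ((j' : ℝ) + 1) * S.S (j' + 1) x (Fin.cons a b) *
              (∏ i, q (b i) (u i)) * q a s)
      _ = ∑ s ∈ Finset.range (k + 1),
            (if 1 ≤ s then ∑ t' : Fin j' → Fin (k + 1),
              (if (∑ i, (t' i : ℕ)) = k - s ∧ (∀ i, 0 < (t' i : ℕ))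
                then ((j' : ℝ) + 1) * S.S (j' + 1) x (Fin.cons a b) *
                  (∏ i, q (b i) (t' i : ℕ)) * q a s
                else 0)
              else 0) := by
          rw [hIcc, Finset.sum_filter]
      _ = ∑ s : Fin (k + 1), ∑ t' : Fin j' → Fin (k + 1),
            (if (s : ℕ) + (∑ i, (t' i : ℕ)) = k ∧ 0 < (s : ℕ) ∧ (∀ i, 0 < (t' i : ℕ))
              then ((j' : ℝ) + 1) * S.S (j' + 1) x (Fin.cons a b) *
                (∏ i, q (b i) (t' i : ℕ)) * q a (s : ℕ)
              else 0) := by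
          refine (Finset.sum_range _).trans ?_
          refine Finset.sum_congr rfl fun s _ => ?_
          have hsk : (s : ℕ) ≤ k := by
            have := s.isLt
            omega
          by_cases hs : 1 ≤ (s : ℕ)
          · rw [if_pos hs]
            refine Finset.sum_congr rfl fun t' _ => ?_
            have : ((∑ i, (t' i : ℕ)) = k - (s : ℕ) ∧ (∀ i, 0 < (t' i : ℕ)))
                ↔ ((s : ℕ) + (∑ i, (t' i : ℕ)) = k ∧ 0 < (s : ℕ) ∧ (∀ i, 0 < (t' i : ℕ))) := by
              constructor
              · rintro ⟨hh, hp⟩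
                exact ⟨by omega, by omega, hp⟩
              · rintro ⟨hh, -, hp⟩
                exact ⟨by omega, hp⟩
            split_ifs with h1 h2 h2
            · rfl
            · exact absurd (this.1 h1) h2
            · exact absurd (this.2 h2) h1
            · rfl
          · rw [if_neg hs, eq_comm, Finset.sum_eq_zero]
            intro t' _
            rw [if_neg]
            rintro ⟨-, h0, -⟩
            omega
  -- now assemble
  unfold yqComp
  rw [Finset.sum_range_succ']
  simp only [Nat.cast_zero, zero_mul, Finset.sum_const_zero, add_zero]
  have lhs_eq : (∑ a : Fin n, ∑ s ∈ Finset.Icc 1 k,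
      thickY S g (k - s) x a * qComp g (thickY S g) a s x)
      = ∑ a : Fin n, ∑ s ∈ Finset.Icc 1 k, ∑ j' ∈ Finset.range k,
          ∑ b : Fin j' → Fin n, ∑ t ∈ parts j' (k - s),
            ((j' : ℝ) + 1) * S.S (j' + 1) x (Fin.cons a b) *
              (∏ i, q (b i) (t i : ℕ)) * q a s := by
    refine Finset.sum_congr rfl fun a _ => Finset.sum_congr rfl fun s hs => ?_
    rw [thickY_eq_dSComp]
    unfold dSComp
    rw [Finset.sum_mul]
    simp only [Finset.mem_Icc] at hs
    refine (Finset.sum_subset (Finset.range_subset_range.2 (by omega : k - s + 1 ≤ k)) ?_).trans ?_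
    · intro j _ hj
      have hlt : k - s < j := by
        simp only [Finset.mem_range, not_lt] at hj
        omega
      rw [parts_eq_empty hlt]
      simp
    · refine Finset.sum_congr rfl fun j _ => ?_
      rw [Finset.sum_mul]
      refine Finset.sum_congr rfl fun b _ => ?_
      rw [Finset.sum_mul]
  rw [lhs_eq]
  rw [show (∑ a : Fin n, ∑ s ∈ Finset.Icc 1 k, ∑ j' ∈ Finset.range k,
      ∑ b : Fin j' → Fin n, ∑ t ∈ parts j' (k - s),
        ((j' : ℝ) + 1) * S.S (j' + 1) x (Fin.cons a b) *
          (∏ i, q (b i) (t i : ℕ)) * q a s)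
      = ∑ j' ∈ Finset.range k, ∑ a : Fin n, ∑ s ∈ Finset.Icc 1 k,
          ∑ b : Fin j' → Fin n, ∑ t ∈ parts j' (k - s),
            ((j' : ℝ) + 1) * S.S (j' + 1) x (Fin.cons a b) *
              (∏ i, q (b i) (t i : ℕ)) * q a s from
    (Finset.sum_congr rfl fun a _ => Finset.sum_comm).trans Finset.sum_comm]
  refine Finset.sum_congr rfl fun j' _ => ?_
  refine (main j').trans (Finset.sum_congr rfl fun b _ => Finset.sum_congr rfl fun t _ => ?_)
  push_cast
  ring

/-- The closed form of the thick-morphism pull-back: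
`Φ_S^*(g) = g(y(x,g)) + S_0(x) − Σ_{j≥2} (j−1) S_j^{a_1…a_j}(x)
(∂_{a_1}g)(y(x,g)) ⋯ (∂_{a_j}g)(y(x,g))`, as an equality of the homogeneous-in-`g`
components of every order, all compositions with the formal map `y(x,g)` being
expanded by Taylor series at `y_0(x) = S_1(x)`. -/
theorem thickPull_closed_form {m n : ℕ} (S : GenFn m n) (g : Fn n) (hg : Sm g)
    (k : ℕ) (x : Fin m → ℝ) :
    thickPull S g k x =
      (if k = 0 then 0 else taylorComp g (thickY S g) (k - 1) x)
        + (if k = 0 then S.S 0 x (fun i => i.elim0) else 0)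
        - ∑ j ∈ Finset.Icc 2 k, ∑ b : Fin j → Fin n, ∑ t ∈ parts j k,
            ((j : ℝ) - 1) * S.S j x b * ∏ i, qComp g (thickY S g) (b i) (t i : ℕ) x := by
  have key : SqComp S g k x - yqComp S g k x
      = (if k = 0 then S.S 0 x (fun i => i.elim0) else 0)
        - ∑ j ∈ Finset.Icc 2 k, ∑ b : Fin j → Fin n, ∑ t ∈ parts j k,
            ((j : ℝ) - 1) * S.S j x b * ∏ i, qComp g (thickY S g) (b i) (t i : ℕ) x := by
    rw [yqComp_eq]
    unfold SqComp
    rw [← Finset.sum_sub_distrib]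
    have step1 : (∑ j ∈ Finset.range (k + 1),
        ((∑ b : Fin j → Fin n, ∑ t ∈ parts j k,
            S.S j x b * ∏ i, qComp g (thickY S g) (b i) (t i : ℕ) x)
          - ∑ b : Fin j → Fin n, ∑ t ∈ parts j k,
              (j : ℝ) * S.S j x b * ∏ i, qComp g (thickY S g) (b i) (t i : ℕ) x))
        = ∑ j ∈ Finset.range (k + 1), ∑ b : Fin j → Fin n, ∑ t ∈ parts j k,
            ((1 : ℝ) - j) * S.S j x b * ∏ i, qComp g (thickY S g) (b i) (t i : ℕ) x := by
      refine Finset.sum_congr rfl fun j _ => ?_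
      rw [← Finset.sum_sub_distrib]
      refine Finset.sum_congr rfl fun b _ => ?_
      rw [← Finset.sum_sub_distrib]
      refine Finset.sum_congr rfl fun t _ => ?_
      ring
    rw [step1]
    have hsplit : Finset.range (k + 1) = insert 0 (Finset.Icc 1 k) := by
      ext r
      simp only [Finset.mem_range, Finset.mem_insert, Finset.mem_Icc]
      omega
    rw [hsplit, Finset.sum_insert (by simp)]
    have h0 : (∑ b : Fin 0 → Fin n, ∑ t ∈ parts 0 k,
        ((1 : ℝ) - (0 : ℕ)) * S.S 0 x b * ∏ i, qComp g (thickY S g) (b i) (t i : ℕ) x)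
        = if k = 0 then S.S 0 x (fun i => i.elim0) else 0 := by
      by_cases hk : k = 0
      · subst hk
        rw [parts_zero_zero,
          Fintype.sum_subsingleton _ (fun i : Fin 0 => i.elim0),
          Fintype.sum_subsingleton _ (fun i : Fin 0 => (0 : Fin 1))]
        simp
      · have hparts : parts 0 k = ∅ := by
          ext t
          simp only [mem_parts, Finset.notMem_empty, iff_false, not_and]
          intro hs
          simp only [Finset.univ_eq_empty, Finset.sum_empty] at hs
          omega
        rw [hparts]
        simp [hk]
    have h1 : (∑ j ∈ Finset.Icc 1 k, ∑ b : Fin j → Fin n, ∑ t ∈ parts j k,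
        ((1 : ℝ) - j) * S.S j x b * ∏ i, qComp g (thickY S g) (b i) (t i : ℕ) x)
        = ∑ j ∈ Finset.Icc 2 k, ∑ b : Fin j → Fin n, ∑ t ∈ parts j k,
            ((1 : ℝ) - j) * S.S j x b * ∏ i, qComp g (thickY S g) (b i) (t i : ℕ) x := by
      rw [Finset.sum_subset (Finset.Icc_subset_Icc_left (by omega : 1 ≤ 2))]
      intro j hj hj2
      simp only [Finset.mem_Icc] at hj hj2
      have : j = 1 := by omega
      subst this
      simp
    rw [h0, h1]
    have h2 : (∑ j ∈ Finset.Icc 2 k, ∑ b : Fin j → Fin n, ∑ t ∈ parts j k,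
        ((1 : ℝ) - j) * S.S j x b * ∏ i, qComp g (thickY S g) (b i) (t i : ℕ) x)
        = - ∑ j ∈ Finset.Icc 2 k, ∑ b : Fin j → Fin n, ∑ t ∈ parts j k,
            ((j : ℝ) - 1) * S.S j x b * ∏ i, qComp g (thickY S g) (b i) (t i : ℕ) x := by
      rw [← Finset.sum_neg_distrib]
      refine Finset.sum_congr rfl fun j _ => ?_
      rw [← Finset.sum_neg_distrib]
      refine Finset.sum_congr rfl fun b _ => ?_
      rw [← Finset.sum_neg_distrib]
      refine Finset.sum_congr rfl fun t _ => ?_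
      ring
    rw [h2]
    ring
  unfold thickPull
  rw [add_sub_assoc, key]
  ring

end ThickMorphism
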